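/- Let S be a Polish space, μ a Borel probability measure on S, and for each N let W_{N,1}, ..., W_{N,N} be an exchangeable family of S-valued random elements. Then the triangular array {W_{N,1:N}}_{N≥1} is μ-chaotic if and only if the empirical measures ν_N = N^{−1} Σ_{j=1}^N δ_{W_{N,j}}, viewed as random elements of the space P(S) of Borel probability measures on S with the topology of weak convergence, converge in distribution to the deterministic limit μ (i.e., the laws of ν_N converge weakly to the Dirac measure at μ). -/

import Mathlib

/-!
Expanding the product, `E ∏ᵢ ∫ gᵢ dν_N` is the average over all maps `φ : Fin r → Fin N` of
`E ∏ᵢ gᵢ (W_{N, φ i})`. By exchangeability every injective `φ` contributes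
`E ∏ᵢ gᵢ (W_{N, i})`, and the non-injective ones form a fraction `1 - N(N-1)⋯(N-r+1)/N^r → 0`.
So chaos amounts to the convergence of the moments `E ∏ᵢ ∫ gᵢ dν_N → ∏ᵢ ∫ gᵢ dμ`, which are
expectations of bounded continuous functions of `ν_N`.

Conversely, the moments of order one and two give `E (∫ f dν_N - ∫ f dμ)² → 0`, so
`∫ f dν_N → ∫ f dμ` in probability for every bounded continuous `f`. The weak topology being the
coarsest making all `ν ↦ ∫ f dν` continuous, `ν_N → μ` in probability, and then
`E F(ν_N) → F(μ)` for bounded continuous `F`.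
-/

open MeasureTheory ProbabilityTheory Filter Topology BoundedContinuousFunction

noncomputable section

/-- A triangular array `W N ·` of random elements of `S` (row `N` having `N` meaningful
entries `W N 0, …, W N (N - 1)`) is `μ`-chaotic if for every `r` and all bounded continuous
`g₁, …, g_r : S → ℝ` we have `E[∏ i, g i (W N i)] → ∏ i, ∫ g i dμ` as `N → ∞`. -/
def IsChaotic {Ω : Type*} [MeasurableSpace Ω] (P : Measure Ω)
    {S : Type*} [TopologicalSpace S] [MeasurableSpace S]
    (W : ℕ → ℕ → Ω → S) (μ : Measure S) : Prop :=
  ∀ (r : ℕ) (g : Fin r → BoundedContinuousFunction S ℝ),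
    Tendsto (fun N : ℕ => ∫ ω, ∏ i : Fin r, (g i) (W N (i : ℕ) ω) ∂P) atTop
      (𝓝 (∏ i : Fin r, ∫ x, (g i) x ∂μ))

/-- The empirical measure `N⁻¹ ∑_{j < N} δ_{W N j ω}` of row `N` of a triangular array `W`,
as a probability measure on `S` (with junk value `δ_{W N 0 ω}` when `N = 0`). -/
def empir {Ω S : Type*} [MeasurableSpace Ω] [MeasurableSpace S]
    (W : ℕ → ℕ → Ω → S) (N : ℕ) (ω : Ω) : ProbabilityMeasure S :=
  if h : 0 < N then
    ⟨(N : ENNReal)⁻¹ • ∑ j ∈ Finset.range N, Measure.dirac (W N j ω), by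
      have hN : (N : ENNReal) ≠ 0 := by exact_mod_cast h.ne'
      constructor
      simp [Measure.smul_apply, smul_eq_mul, ENNReal.inv_mul_cancel hN (by simp)]⟩
  else ⟨Measure.dirac (W N 0 ω), inferInstance⟩

open scoped ENNReal

section Combinatorics

open Finset in
lemma card_filter_not_injective (r N : ℕ) :
    #{φ : Fin r → Fin N | ¬ Function.Injective φ} = N ^ r - N.descFactorial r := by
  rw [← Fintype.card_subtype, Fintype.card_subtype_compl,
    Fintype.card_congr (Equiv.subtypeInjectiveEquivEmbedding _ _)]
  simp [Fintype.card_embedding_eq]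

lemma abs_average_sub_le_of_eq_of_injective {r N : ℕ} [NeZero N] {T : (Fin r → Fin N) → ℝ}
    {A C : ℝ} (hT : ∀ φ, |T φ - A| ≤ C) (hinj : ∀ φ, Function.Injective φ → T φ = A) :
    |((N : ℝ) ^ r)⁻¹ * ∑ φ, T φ - A| ≤ (1 - N.descFactorial r / (N : ℝ) ^ r) * C := by
  have hN : (0 : ℝ) < (N : ℝ) ^ r := pow_pos (Nat.cast_pos.2 (Nat.pos_of_neZero N)) r
  have hsum : |∑ φ, (T φ - A)| ≤ (N ^ r - N.descFactorial r : ℕ) * C := by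
    rw [← Finset.sum_filter_of_ne fun φ _ hφ => mt (fun h => sub_eq_zero.2 (hinj φ h)) hφ,
      ← card_filter_not_injective, ← nsmul_eq_mul]
    exact (Finset.abs_sum_le_sum_abs _ _).trans (Finset.sum_le_card_nsmul _ _ _ fun φ _ => hT φ)
  calc |((N : ℝ) ^ r)⁻¹ * ∑ φ, T φ - A| = ((N : ℝ) ^ r)⁻¹ * |∑ φ, (T φ - A)| := by
        rw [← abs_of_pos (inv_pos.2 hN), ← abs_mul, abs_of_pos (inv_pos.2 hN),
          Finset.sum_sub_distrib, Finset.sum_const, Finset.card_univ, Fintype.card_fun,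
          Fintype.card_fin, Fintype.card_fin, nsmul_eq_mul]
        push_cast
        field_simp
    _ ≤ ((N : ℝ) ^ r)⁻¹ * ((N ^ r - N.descFactorial r : ℕ) * C) := by gcongr
    _ = (1 - N.descFactorial r / (N : ℝ) ^ r) * C := by
        rw [Nat.cast_sub (Nat.descFactorial_le_pow N r)]
        push_cast
        field_simp

lemma tendsto_descFactorial_div_pow (r : ℕ) :
    Tendsto (fun N : ℕ => (N.descFactorial r : ℝ) / (N : ℝ) ^ r) atTop (𝓝 1) :=
  (Asymptotics.isEquivalent_iff_tendsto_one
    ((eventually_ne_atTop 0).mono fun N hN => by positivity)).1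
    (isEquivalent_descFactorial r)

end Combinatorics

section EmpiricalMeasure

variable {S : Type*} [MeasurableSpace S]

def empiricalMeasure {N : ℕ} [NeZero N] (x : Fin N → S) : ProbabilityMeasure S :=
  ⟨(N : ℝ≥0∞)⁻¹ • ∑ j, Measure.dirac (x j),
    ⟨by simp [ENNReal.inv_mul_cancel (NeZero.ne (N : ℝ≥0∞)) (ENNReal.natCast_ne_top N)]⟩⟩

lemma empir_eq_empiricalMeasure {Ω : Type*} [MeasurableSpace Ω] (W : ℕ → ℕ → Ω → S)
    (N : ℕ) [NeZero N] (ω : Ω) :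
    empir W N ω = empiricalMeasure fun j : Fin N => W N j ω := by
  apply Subtype.ext
  simp [empir, empiricalMeasure, Nat.pos_of_neZero,
    Fin.sum_univ_eq_sum_range (fun j => Measure.dirac (W N j ω))]

variable [TopologicalSpace S] [OpensMeasurableSpace S] {N : ℕ} [NeZero N]

lemma integral_empiricalMeasure (x : Fin N → S) (f : S →ᵇ ℝ) :
    ∫ y, f y ∂(empiricalMeasure x : Measure S) = (N : ℝ)⁻¹ * ∑ j, f (x j) := by
  simp [empiricalMeasure, integral_smul_measure,
    integral_finsetSum_measure fun j _ => f.integrable _,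
    integral_dirac' _ _ f.continuous.measurable.stronglyMeasurable]

lemma continuous_empiricalMeasure :
    Continuous (empiricalMeasure : (Fin N → S) → ProbabilityMeasure S) :=
  ProbabilityMeasure.continuous_iff_forall_continuous_integral.2 fun f => by
    simp_rw [integral_empiricalMeasure]
    fun_prop

lemma measurable_comp_empir [SecondCountableTopology S] {Ω E : Type*} [MeasurableSpace Ω]
    [TopologicalSpace E] [MeasurableSpace E] [BorelSpace E] {W : ℕ → ℕ → Ω → S}
    (hW : ∀ N j, Measurable (W N j)) {G : ProbabilityMeasure S → E} (hG : Continuous G) :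
    Measurable fun ω => G (empir W N ω) := by
  simp_rw [empir_eq_empiricalMeasure]
  exact (hG.comp continuous_empiricalMeasure).measurable.comp
    (measurable_pi_lambda _ fun j => hW N j)

end EmpiricalMeasure

lemma norm_prod_apply_le {S : Type*} [TopologicalSpace S] {r : ℕ} (g : Fin r → S →ᵇ ℝ)
    (y : Fin r → S) :
    ‖∏ i, g i (y i)‖ ≤ ∏ i, ‖g i‖ :=
  (Finset.norm_prod_le _ _).trans
    (Finset.prod_le_prod (fun _ _ => norm_nonneg _) fun i _ => (g i).norm_coe_le_norm (y i))

section Exchangeable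

variable {Ω S : Type*} [MeasurableSpace Ω] [MeasurableSpace S] {P : Measure Ω} {N : ℕ}
  {Y : Ω → Fin N → S}

lemma map_comp_eq_of_injective (hY : Measurable Y)
    (hexch : ∀ σ : Equiv.Perm (Fin N), P.map Y = P.map fun ω => Y ω ∘ σ)
    {ι : Type*} [Finite ι] {φ ψ : ι → Fin N} (hφ : Function.Injective φ)
    (hψ : Function.Injective ψ) :
    P.map (fun ω => Y ω ∘ φ) = P.map (fun ω => Y ω ∘ ψ) := by
  obtain ⟨σ, hσ⟩ := Equiv.Perm.exists_extending_pair ψ φ hψ hφ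
  have hrestr : Measurable fun y : Fin N → S => y ∘ ψ :=
    measurable_pi_lambda _ fun i => measurable_pi_apply (ψ i)
  have hYσ : Measurable fun ω => Y ω ∘ σ :=
    measurable_pi_lambda _ fun j => (measurable_pi_apply _).comp hY
  have hφσ : (fun ω => Y ω ∘ φ) = (fun y => y ∘ ψ) ∘ fun ω => Y ω ∘ σ := by
    ext ω i
    simp [hσ]
  rw [hφσ, ← Measure.map_map hrestr hYσ, ← hexch, Measure.map_map hrestr hY]
  rfl

variable [TopologicalSpace S] [OpensMeasurableSpace S]

lemma integral_prod_comp_eq_of_injective (hY : Measurable Y)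
    (hexch : ∀ σ : Equiv.Perm (Fin N), P.map Y = P.map fun ω => Y ω ∘ σ)
    {r : ℕ} (g : Fin r → S →ᵇ ℝ) {φ ψ : Fin r → Fin N} (hφ : Function.Injective φ)
    (hψ : Function.Injective ψ) :
    ∫ ω, ∏ i, g i (Y ω (φ i)) ∂P = ∫ ω, ∏ i, g i (Y ω (ψ i)) ∂P := by
  have hG : Measurable fun y : Fin r → S => ∏ i, g i (y i) :=
    Finset.measurable_prod _ fun i _ => (g i).continuous.measurable.comp (measurable_pi_apply i)
  have hmap (χ : Fin r → Fin N) :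
      ∫ ω, ∏ i, g i (Y ω (χ i)) ∂P = ∫ y, ∏ i, g i (y i) ∂(P.map fun ω => Y ω ∘ χ) :=
    (integral_map (measurable_pi_lambda _ fun i => (measurable_pi_apply _).comp hY).aemeasurable
      hG.aestronglyMeasurable).symm
  rw [hmap, hmap, map_comp_eq_of_injective hY hexch hφ hψ]

lemma integral_prod_integral_empiricalMeasure [IsFiniteMeasure P] [NeZero N]
    (hY : Measurable Y) {r : ℕ} (g : Fin r → S →ᵇ ℝ) :
    ∫ ω, ∏ i, ∫ x, g i x ∂(empiricalMeasure (Y ω) : Measure S) ∂P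
      = ((N : ℝ) ^ r)⁻¹ * ∑ φ : Fin r → Fin N, ∫ ω, ∏ i, g i (Y ω (φ i)) ∂P := by
  have hint (φ : Fin r → Fin N) : Integrable (fun ω => ∏ i, g i (Y ω (φ i))) P :=
    .of_bound (Finset.measurable_prod _ fun i _ =>
        (g i).continuous.measurable.comp ((measurable_pi_apply _).comp hY)).aestronglyMeasurable
      _ (.of_forall fun ω => norm_prod_apply_le g _)
  simp_rw [integral_empiricalMeasure, Finset.prod_mul_distrib, Finset.prod_univ_sum,
    Fintype.piFinset_univ, Finset.prod_const, Finset.card_univ, Fintype.card_fin, inv_pow,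
    integral_const_mul]
  rw [integral_finsetSum _ fun φ _ => hint φ]

lemma abs_integral_prod_integral_empiricalMeasure_sub_le [IsProbabilityMeasure P] [NeZero N]
    (hY : Measurable Y) (hexch : ∀ σ : Equiv.Perm (Fin N), P.map Y = P.map fun ω => Y ω ∘ σ)
    {r : ℕ} (hrN : r ≤ N) (g : Fin r → S →ᵇ ℝ) :
    |∫ ω, ∏ i, ∫ x, g i x ∂(empiricalMeasure (Y ω) : Measure S) ∂P
        - ∫ ω, ∏ i, g i (Y ω (Fin.castLE hrN i)) ∂P|
      ≤ (1 - N.descFactorial r / (N : ℝ) ^ r) * (2 * ∏ i, ‖g i‖) := by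
  have hbound (φ : Fin r → Fin N) : |∫ ω, ∏ i, g i (Y ω (φ i)) ∂P| ≤ ∏ i, ‖g i‖ := by
    simpa using norm_integral_le_of_norm_le_const (μ := P)
      (.of_forall fun ω => norm_prod_apply_le g (Y ω ∘ φ))
  rw [integral_prod_integral_empiricalMeasure hY g]
  refine abs_average_sub_le_of_eq_of_injective (fun φ => ?_)
    fun φ hφ => integral_prod_comp_eq_of_injective hY hexch g hφ (Fin.castLE_injective hrN)
  linarith [abs_sub (∫ ω, ∏ i, g i (Y ω (φ i)) ∂P) (∫ ω, ∏ i, g i (Y ω (Fin.castLE hrN i)) ∂P),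
    hbound φ, hbound (Fin.castLE hrN)]

end Exchangeable

lemma isChaotic_iff_tendsto_integral_prod_integral_empir {Ω S : Type*} [MeasurableSpace Ω]
    {P : Measure Ω} [IsProbabilityMeasure P] [TopologicalSpace S] [MeasurableSpace S]
    [OpensMeasurableSpace S] {W : ℕ → ℕ → Ω → S} (hW : ∀ N j, Measurable (W N j))
    (hexch : ∀ (N : ℕ) (σ : Equiv.Perm (Fin N)),
      P.map (fun ω (j : Fin N) => W N (j : ℕ) ω)
        = P.map (fun ω (j : Fin N) => W N ((σ j : Fin N) : ℕ) ω))
    (μ : Measure S) :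
    IsChaotic P W μ ↔ ∀ (r : ℕ) (g : Fin r → S →ᵇ ℝ),
      Tendsto (fun N => ∫ ω, ∏ i, ∫ x, g i x ∂(empir W N ω : Measure S) ∂P) atTop
        (𝓝 (∏ i, ∫ x, g i x ∂μ)) := by
  refine forall₂_congr fun r g => ?_
  have hbound : Tendsto (fun N : ℕ => (1 - N.descFactorial r / (N : ℝ) ^ r) * (2 * ∏ i, ‖g i‖))
      atTop (𝓝 0) := by
    simpa using ((tendsto_const_nhds (x := (1 : ℝ))).sub
      (tendsto_descFactorial_div_pow r)).mul_const (2 * ∏ i, ‖g i‖)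
  have hdiff : Tendsto (fun N => ∫ ω, ∏ i, ∫ x, g i x ∂(empir W N ω : Measure S) ∂P
      - ∫ ω, ∏ i, g i (W N i ω) ∂P) atTop (𝓝 0) := by
    refine squeeze_zero_norm' ?_ hbound
    filter_upwards [eventually_ge_atTop (max r 1)] with N hN
    have : NeZero N := ⟨by omega⟩
    simp_rw [empir_eq_empiricalMeasure]
    exact abs_integral_prod_integral_empiricalMeasure_sub_le
      (measurable_pi_lambda _ fun j => hW N j) (hexch N) (le_of_max_le_left hN) g
  exact ⟨fun h => by simpa using h.add hdiff, fun h => by simpa using h.sub hdiff⟩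

section InProbability

variable {Ω ι T : Type*} [MeasurableSpace Ω] {P : Measure Ω} {l : Filter ι}

/-- `inProbability P X l ≤ 𝓝 x` says that `X i → x` in probability; unlike `TendstoInMeasure`,
this makes sense in any topological space, such as `ProbabilityMeasure S`. -/
def inProbability (P : Measure Ω) (X : ι → Ω → T) (l : Filter ι) : Filter T where
  sets := {U | Tendsto (fun i => P {ω | X i ω ∉ U}) l (𝓝 0)}
  univ_sets := by simpa using tendsto_const_nhds
  sets_of_superset {U V} hU hUV := tendsto_of_tendsto_of_tendsto_of_le_of_le tendsto_const_nhds hU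
    (fun i => zero_le) fun i => measure_mono fun ω hω => mt (@hUV _) hω
  inter_sets {U V} hU hV := by
    refine tendsto_of_tendsto_of_tendsto_of_le_of_le tendsto_const_nhds (by simpa using hU.add hV)
      (fun i => zero_le) fun i => (measure_mono fun ω hω => ?_).trans (measure_union_le _ _)
    simpa [or_iff_not_imp_left] using hω

lemma tendsto_inProbability_iff {E : Type*} [PseudoMetricSpace E] {X : ι → Ω → T} {φ : T → E}
    {c : E} :
    Tendsto φ (inProbability P X l) (𝓝 c) ↔
      TendstoInMeasure P (fun i ω => φ (X i ω)) l fun _ => c := by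
  simp [Metric.tendsto_nhds, tendstoInMeasure_iff_dist, Filter.Eventually, inProbability]

lemma inProbability_le_nhds_iff {S : Type*} [TopologicalSpace S] [MeasurableSpace S]
    [OpensMeasurableSpace S] {X : ι → Ω → ProbabilityMeasure S} {ν : ProbabilityMeasure S} :
    inProbability P X l ≤ 𝓝 ν ↔ ∀ f : S →ᵇ ℝ,
      TendstoInMeasure P (fun i ω => ∫ x, f x ∂(X i ω : Measure S)) l
        fun _ => ∫ x, f x ∂(ν : Measure S) := by
  rw [← tendsto_id', ProbabilityMeasure.tendsto_iff_forall_integral_tendsto]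
  simp only [id, tendsto_inProbability_iff]

lemma abs_integral_sub_le_add_mul_measureReal [IsProbabilityMeasure P] {Y : Ω → ℝ}
    (hY : Measurable Y) {c K δ : ℝ} (hK : ∀ ω, |Y ω - c| ≤ K) (hδ : 0 ≤ δ) :
    |∫ ω, Y ω ∂P - c| ≤ δ + K * P.real {ω | δ ≤ |Y ω - c|} := by
  set A := {ω | δ ≤ |Y ω - c|}
  have hA : MeasurableSet A := measurableSet_le measurable_const ((hY.sub_const c).abs)
  have hYc : Integrable (fun ω => Y ω - c) P :=
    .of_bound (hY.sub_const c).aestronglyMeasurable K (.of_forall hK)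
  have hpoint (ω : Ω) : |Y ω - c| ≤ δ + A.indicator (fun _ => K) ω := by
    by_cases hω : ω ∈ A
    · simpa [hω] using (hK ω).trans (le_add_of_nonneg_left hδ)
    · simpa [hω] using (not_le.1 hω).le
  calc |∫ ω, Y ω ∂P - c| = |∫ ω, (Y ω - c) ∂P| := by
        rw [integral_sub ((hYc.add (integrable_const c)).congr
          (.of_forall fun ω => sub_add_cancel (Y ω) c)) (integrable_const c)]
        simp
    _ ≤ ∫ ω, |Y ω - c| ∂P := abs_integral_le_integral_abs
    _ ≤ ∫ ω, (δ + A.indicator (fun _ => K) ω) ∂P :=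
        integral_mono hYc.abs ((integrable_const δ).add ((integrable_const K).indicator hA))
          hpoint
    _ = δ + K * P.real A := by
        rw [integral_add (integrable_const δ) ((integrable_const K).indicator hA),
          integral_indicator_const K hA]
        simp [mul_comm]

lemma tendsto_integral_of_inProbability_le_nhds [TopologicalSpace T] [IsProbabilityMeasure P]
    {X : ι → Ω → T} {x : T} (hX : inProbability P X l ≤ 𝓝 x) (F : T →ᵇ ℝ)
    (hF : ∀ᶠ i in l, Measurable fun ω => F (X i ω)) :
    Tendsto (fun i => ∫ ω, F (X i ω) ∂P) l (𝓝 (F x)) := by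
  refine Metric.tendsto_nhds.2 fun ε hε => ?_
  have hU : {y | |F y - F x| < ε / 2} ∈ 𝓝 x :=
    (isOpen_lt (by fun_prop) continuous_const).mem_nhds (by simpa using half_pos hε)
  have hsmall : Tendsto (fun i => 2 * ‖F‖ * P.real {ω | ε / 2 ≤ |F (X i ω) - F x|}) l (𝓝 0) := by
    simpa [measureReal_def] using
      ((ENNReal.tendsto_toReal ENNReal.zero_ne_top).comp (hX hU)).const_mul (2 * ‖F‖)
  filter_upwards [hF, hsmall.eventually (gt_mem_nhds (half_pos hε))] with i hmeas hi
  calc dist (∫ ω, F (X i ω) ∂P) (F x)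
      ≤ ε / 2 + 2 * ‖F‖ * P.real {ω | ε / 2 ≤ |F (X i ω) - F x|} :=
        abs_integral_sub_le_add_mul_measureReal hmeas
          (fun ω => (Real.dist_eq _ _).symm.le.trans (F.dist_le_two_norm _ _)) (half_pos hε).le
    _ < ε := by linarith

end InProbability

section SecondMoment

variable {Ω ι : Type*} [MeasurableSpace Ω] {P : Measure Ω} {l : Filter ι} {Y : ι → Ω → ℝ} {m : ℝ}

lemma tendstoInMeasure_of_tendsto_integral_sq_sub [IsFiniteMeasure P]
    (hY : ∀ᶠ i in l, Integrable (fun ω => (Y i ω - m) ^ 2) P)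
    (h : Tendsto (fun i => ∫ ω, (Y i ω - m) ^ 2 ∂P) l (𝓝 0)) :
    TendstoInMeasure P Y l fun _ => m := by
  refine tendstoInMeasure_iff_measureReal_dist.2 fun ε hε => ?_
  refine squeeze_zero' (.of_forall fun i => measureReal_nonneg) ?_
    (by simpa using h.div_const (ε ^ 2))
  filter_upwards [hY] with i hi
  rw [le_div_iff₀ (by positivity), mul_comm]
  refine (mul_le_mul_of_nonneg_left (measureReal_mono fun ω hω => ?_) (sq_nonneg ε)).trans
    (mul_meas_ge_le_integral_of_nonneg (.of_forall fun ω => sq_nonneg _) hi _)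
  simpa [Real.dist_eq, sq_abs] using pow_le_pow_left₀ hε.le hω 2

lemma tendstoInMeasure_of_tendsto_moments [IsProbabilityMeasure P]
    (hY : ∀ᶠ i in l, MemLp (Y i) 2 P)
    (h₁ : Tendsto (fun i => ∫ ω, Y i ω ∂P) l (𝓝 m))
    (h₂ : Tendsto (fun i => ∫ ω, Y i ω ^ 2 ∂P) l (𝓝 (m ^ 2))) :
    TendstoInMeasure P Y l fun _ => m := by
  refine tendstoInMeasure_of_tendsto_integral_sq_sub
    (hY.mono fun i hi => (hi.sub (memLp_const m)).integrable_sq) ?_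
  have hlim := (h₂.sub (h₁.const_mul (2 * m))).add (tendsto_const_nhds (x := m ^ 2))
  rw [show m ^ 2 - 2 * m * m + m ^ 2 = 0 by ring] at hlim
  refine hlim.congr' ?_
  filter_upwards [hY] with i hi
  have h1 := (hi.integrable one_le_two).const_mul (2 * m)
  have h2 := hi.integrable_sq
  have hexpand : (fun ω => (Y i ω - m) ^ 2) = fun ω => Y i ω ^ 2 - 2 * m * Y i ω + m ^ 2 := by
    ext ω
    ring
  have h21 : Integrable (fun ω => Y i ω ^ 2 - 2 * m * Y i ω) P := h2.sub h1
  rw [hexpand, integral_add h21 (integrable_const _), integral_sub h2 h1, integral_const_mul]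
  simp

end SecondMoment

lemma tendstoInMeasure_integral_empir {Ω S : Type*} [MeasurableSpace Ω] {P : Measure Ω}
    [IsProbabilityMeasure P] [TopologicalSpace S] [SecondCountableTopology S] [MeasurableSpace S]
    [OpensMeasurableSpace S] {W : ℕ → ℕ → Ω → S} (hW : ∀ N j, Measurable (W N j))
    {μ : Measure S}
    (hmom : ∀ (r : ℕ) (g : Fin r → S →ᵇ ℝ),
      Tendsto (fun N => ∫ ω, ∏ i, ∫ x, g i x ∂(empir W N ω : Measure S) ∂P) atTop
        (𝓝 (∏ i, ∫ x, g i x ∂μ)))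
    (f : S →ᵇ ℝ) :
    TendstoInMeasure P (fun N ω => ∫ x, f x ∂(empir W N ω : Measure S)) atTop
      fun _ => ∫ x, f x ∂μ := by
  refine tendstoInMeasure_of_tendsto_moments ?_ (by simpa using hmom 1 fun _ => f)
    (by simpa [sq] using hmom 2 fun _ => f)
  filter_upwards [eventually_ne_atTop 0] with N hN
  have : NeZero N := ⟨hN⟩
  exact .of_bound (measurable_comp_empir hW
      (ProbabilityMeasure.continuous_integral_boundedContinuousFunction f)).aestronglyMeasurable
    ‖f‖ (.of_forall fun ω => f.norm_integral_le_norm _)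

def prodIntegral {S : Type*} [TopologicalSpace S] [MeasurableSpace S] [OpensMeasurableSpace S]
    {r : ℕ} (g : Fin r → S →ᵇ ℝ) : ProbabilityMeasure S →ᵇ ℝ :=
  .ofNormedAddCommGroup (fun ν => ∏ i, ∫ x, g i x ∂(ν : Measure S))
    (continuous_finsetProd _ fun i _ =>
      ProbabilityMeasure.continuous_integral_boundedContinuousFunction (g i))
    (∏ i, ‖g i‖) fun _ => (Finset.norm_prod_le _ _).trans
      (Finset.prod_le_prod (fun _ _ => norm_nonneg _) fun i _ => (g i).norm_integral_le_norm _)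

/-- **Sznitman's characterization of propagation of chaos.**
Let `S` be a Polish space, `μ` a Borel probability measure on `S`, and for each `N` let
`W N 0, …, W N (N-1)` be an exchangeable family of `S`-valued random elements on a
probability space `(Ω, P)`.  Then the triangular array is `μ`-chaotic if and only if the
empirical measures `ν_N = N⁻¹ ∑_{j < N} δ_{W N j}`, viewed as random elements of the space
`P(S)` of Borel probability measures on `S` with the topology of weak convergence, converge
in distribution to the deterministic limit `μ`, i.e. `E[F(ν_N)] → F(μ)` for every bounded
continuous `F : P(S) → ℝ` (equivalently, the laws of `ν_N` converge weakly to the Dirac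
measure at `μ`). -/
theorem isChaotic_iff_empirical_tendsto_dirac
    {Ω S : Type*} [MeasurableSpace Ω] (P : Measure Ω) [IsProbabilityMeasure P]
    [TopologicalSpace S] [PolishSpace S] [MeasurableSpace S] [BorelSpace S]
    (μ : Measure S) (hμ : IsProbabilityMeasure μ)
    (W : ℕ → ℕ → Ω → S) (hW : ∀ N j, Measurable (W N j))
    (hexch : ∀ (N : ℕ) (σ : Equiv.Perm (Fin N)),
      P.map (fun ω (j : Fin N) => W N (j : ℕ) ω)
        = P.map (fun ω (j : Fin N) => W N ((σ j : Fin N) : ℕ) ω)) :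
    IsChaotic P W μ ↔
      ∀ F : BoundedContinuousFunction (ProbabilityMeasure S) ℝ,
        Tendsto (fun N : ℕ => ∫ ω, F (empir W N ω) ∂P) atTop
          (𝓝 (F (⟨μ, hμ⟩ : ProbabilityMeasure S))) := by
  rw [isChaotic_iff_tendsto_integral_prod_integral_empir hW hexch]
  refine ⟨fun hmom F => ?_, fun h r g => h (prodIntegral g)⟩
  have hconv : inProbability P (empir W) atTop ≤ 𝓝 ⟨μ, hμ⟩ :=
    inProbability_le_nhds_iff.2 (tendstoInMeasure_integral_empir hW hmom)
  refine tendsto_integral_of_inProbability_le_nhds hconv F ?_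
  filter_upwards [eventually_ne_atTop 0] with N hN
  have : NeZero N := ⟨hN⟩
  exact measurable_comp_empir hW F.continuous

end
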